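/- arXiv:1605.06950 — 5 statements merged into one kernel-verified Lean document; each statement's English description precedes it below -/
import Mathlib

section
/- Let m be a medoid of a finite set S in a metric space, i.e., an index minimizing the energy E(i) = (1/N) Σ_l dist(x(l), x(i)). Then every index j with dist(x(m), x(j)) > 2 E(m) satisfies E(j) > E(m); in particular, any medoid lies within distance 2 E(m) of x(m). -/
theorem medoid_within_twice_min_energy {X : Type*} [MetricSpace X] (N : ℕ) (hN : 0 < N)
    (x : Fin N → X) (E : Fin N → ℝ)
    (hE : ∀ i, E i = (1 / (N : ℝ)) * ∑ l, dist (x l) (x i))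
    (m : Fin N) (hm : ∀ i, E m ≤ E i) :
    (∀ j, dist (x m) (x j) > 2 * E m → E j > E m) ∧
      ∀ j, (∀ i, E j ≤ E i) → dist (x m) (x j) ≤ 2 * E m := by
  have hNpos : (0 : ℝ) < N := by exact_mod_cast hN
  have key : ∀ j, dist (x m) (x j) ≤ E m + E j := by
    intro j
    have hsum : (N : ℝ) * dist (x m) (x j) ≤
        (∑ l, dist (x l) (x m)) + ∑ l, dist (x l) (x j) := by
      rw [← Finset.sum_add_distrib]
      calc (N : ℝ) * dist (x m) (x j)
          = ∑ _l : Fin N, dist (x m) (x j) := by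
            simp [Finset.sum_const, mul_comm]
        _ ≤ ∑ l, (dist (x l) (x m) + dist (x l) (x j)) := by
            apply Finset.sum_le_sum
            intro l _
            exact dist_triangle_left _ _ _
    rw [hE m, hE j]
    rw [div_mul_eq_mul_div, div_mul_eq_mul_div, one_mul, one_mul, ← add_div,
      le_div_iff₀ hNpos, mul_comm]
    exact hsum
  constructor
  · intro j hj
    have := key j
    linarith
  · intro j hj
    have h1 := key j
    have h2 := hj m
    linarith
end

section
/- Let S be a finite set in a metric space with energies E(i) = (1/N) Σ_l dist(x(l), x(i)), let m* minimize E with minimum E*, and let i be any index. Then every index j with dist(x(i), x(j)) < E(i) - E* satisfies E(j) > E*, i.e., no medoid lies strictly inside the ball of radius E(i) - E* around x(i) other than possibly x(i) itself when E(i) = E*. -/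
theorem exclusion_ball {X : Type*} [MetricSpace X] (N : ℕ) (hN : 0 < N)
    (x : Fin N → X) (E : Fin N → ℝ)
    (hE : ∀ i, E i = (1 / (N : ℝ)) * ∑ l, dist (x l) (x i))
    (mstar : Fin N) (hm : ∀ i, E mstar ≤ E i) (Estar : ℝ) (hEstar : Estar = E mstar)
    (i : Fin N) :
    ∀ j, dist (x i) (x j) < E i - Estar → E j > Estar := by
  intro j hj
  have hNpos : (0:ℝ) < N := by exact_mod_cast hN
  have key : E i ≤ E j + dist (x i) (x j) := by
    rw [hE i, hE j]
    have hsum : ∑ l, dist (x l) (x i) ≤ ∑ l, (dist (x l) (x j) + dist (x j) (x i)) := by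
      apply Finset.sum_le_sum
      intro l _
      exact dist_triangle _ _ _
    rw [Finset.sum_add_distrib, Finset.sum_const, Finset.card_univ, Fintype.card_fin] at hsum
    have := mul_le_mul_of_nonneg_left hsum (by positivity : (0:ℝ) ≤ 1 / N)
    calc (1 / (N:ℝ)) * ∑ l, dist (x l) (x i)
        ≤ (1 / N) * (∑ l, dist (x l) (x j) + N • dist (x j) (x i)) := this
      _ = (1 / N) * ∑ l, dist (x l) (x j) + dist (x i) (x j) := by
          rw [nsmul_eq_mul, mul_add, dist_comm (x j) (x i)]
          field_simp
  linarith
end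

section
/- The trimed algorithm is correct: throughout its execution the lower bounds satisfy l(j) ≤ E(j) for all j, and upon termination the returned element x(m*) satisfies E(m*) ≤ E(j) for all j, i.e., it is a medoid of S. -/
open Classical in
/-- State of the `trimed` algorithm: lower bounds `l` on the energies, and the
current best medoid candidate (`none` before any element has been computed). -/
structure TrimedState (N : ℕ) where
  l : Fin N → ℝ
  best : Option (Fin N)

open Classical in
/-- One iteration of `trimed`, processing index `i`: if the lower bound `l i` is
below the energy of the current best candidate (or no candidate exists yet),
element `i` is computed: all distances `d j = dist (x i) (x j)` are computed,
`l i` is set to `E i`, every `l j` is updated to `max (l j) |E i - d j|`, and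
the best candidate is replaced by `i` when `E i` is smaller. Otherwise `i` is
skipped. -/
noncomputable def trimedStep {X : Type*} [MetricSpace X] {N : ℕ}
    (x : Fin N → X) (E : Fin N → ℝ) (s : TrimedState N) (i : Fin N) :
    TrimedState N :=
  let compute : Prop := match s.best with
    | none => True
    | some m => s.l i < E m
  if compute then
    { l := fun j => if j = i then E i else max (s.l j) |E i - dist (x i) (x j)|
      best := match s.best with
        | none => some i
        | some m => if E i < E m then some i else some m }
  else s

section Aux

variable {X : Type*} [MetricSpace X] {N : ℕ}

lemma trimed_key (hN : 0 < N) (x : Fin N → X) (E : Fin N → ℝ)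
    (hE : ∀ i, E i = (1 / (N : ℝ)) * ∑ l, dist (x l) (x i)) (i j : Fin N) :
    |E i - dist (x i) (x j)| ≤ E j := by
  have hNpos : (0:ℝ) < N := by exact_mod_cast hN
  rw [abs_sub_le_iff]
  constructor
  · have h1 : ∑ l, dist (x l) (x i) ≤ ∑ l, dist (x l) (x j) + N * dist (x i) (x j) := by
      have h2 : ∑ l, dist (x l) (x i) ≤ ∑ l, (dist (x l) (x j) + dist (x i) (x j)) := by
        apply Finset.sum_le_sum
        intro l _
        calc dist (x l) (x i) ≤ dist (x l) (x j) + dist (x j) (x i) := dist_triangle _ _ _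
          _ = dist (x l) (x j) + dist (x i) (x j) := by rw [dist_comm (x j)]
      simpa [Finset.sum_add_distrib, Finset.card_univ, mul_comm] using h2
    rw [hE i, hE j]
    have h3 := mul_le_mul_of_nonneg_left h1 (le_of_lt (one_div_pos.mpr hNpos))
    have h4 : 1 / (N:ℝ) * (∑ l, dist (x l) (x j) + N * dist (x i) (x j))
        = 1 / (N:ℝ) * ∑ l, dist (x l) (x j) + dist (x i) (x j) := by
      field_simp
    linarith
  · have h1 : (N:ℝ) * dist (x i) (x j) ≤ ∑ l, dist (x l) (x i) + ∑ l, dist (x l) (x j) := by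
      have h2 : ∑ _l : Fin N, dist (x i) (x j) ≤ ∑ l, (dist (x l) (x i) + dist (x l) (x j)) := by
        apply Finset.sum_le_sum
        intro l _
        calc dist (x i) (x j) ≤ dist (x i) (x l) + dist (x l) (x j) := dist_triangle _ _ _
          _ = dist (x l) (x i) + dist (x l) (x j) := by rw [dist_comm (x i)]
      simpa [Finset.sum_add_distrib, Finset.card_univ] using h2
    rw [hE i, hE j]
    have h3 := mul_le_mul_of_nonneg_left h1 (le_of_lt (one_div_pos.mpr hNpos))
    have hd : dist (x i) (x j) = 1 / (N:ℝ) * ((N:ℝ) * dist (x i) (x j)) := by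
      field_simp
    have h5 : 1 / (N:ℝ) * (∑ l, dist (x l) (x i) + ∑ l, dist (x l) (x j))
        = 1 / (N:ℝ) * ∑ l, dist (x l) (x i) + 1 / (N:ℝ) * ∑ l, dist (x l) (x j) := by ring
    linarith [hd ▸ h3, h5 ▸ h3, h3]

lemma trimed_step_inv (x : Fin N → X) (E : Fin N → ℝ)
    (key : ∀ i j : Fin N, |E i - dist (x i) (x j)| ≤ E j)
    (s : TrimedState N) (i : Fin N) (t : List (Fin N))
    (hl : ∀ j, s.l j ≤ E j)
    (hb : ∀ m, s.best = some m → ∀ k ∈ t, E m ≤ E k)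
    (hn : s.best = none → t = []) :
    (∀ j, (trimedStep x E s i).l j ≤ E j) ∧
    (∀ m, (trimedStep x E s i).best = some m → ∀ k ∈ t ++ [i], E m ≤ E k) ∧
    ((trimedStep x E s i).best = none → t ++ [i] = []) := by
  rw [trimedStep]
  by_cases hc : (match s.best with | none => True | some m => s.l i < E m)
  · rw [if_pos hc]
    refine ⟨fun j => ?_, fun m hm => ?_, fun h => ?_⟩
    · by_cases hj : j = i
      · simp [hj]
      · simp only [hj, if_false]
        exact max_le (hl j) (key i j)
    · rcases hbs : s.best with _ | m0
      · simp only [hbs] at hm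
        injection hm with hm; subst hm
        intro k hk
        rcases List.mem_append.mp hk with hk | hk
        · rw [hn hbs] at hk; simp at hk
        · simp at hk; subst hk; exact le_refl _
      · simp only [hbs] at hm hc
        intro k hk
        by_cases hlt : E i < E m0
        · rw [if_pos hlt] at hm; injection hm with hm; subst hm
          rcases List.mem_append.mp hk with hk | hk
          · exact le_of_lt (lt_of_lt_of_le hlt (hb m0 hbs k hk))
          · simp at hk; subst hk; exact le_refl _
        · rw [if_neg hlt] at hm; injection hm with hm; subst hm
          rcases List.mem_append.mp hk with hk | hk
          · exact hb m0 hbs k hk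
          · simp at hk; subst hk; exact le_of_not_gt hlt
    · rcases hbs : s.best with _ | m0
      · simp only [hbs] at h; simp at h
      · simp only [hbs] at h; split_ifs at h
  · rw [if_neg hc]
    rcases hbs : s.best with _ | m0
    · exfalso; rw [hbs] at hc; exact hc trivial
    · rw [hbs] at hc
      refine ⟨hl, fun m hm => ?_, fun h => by simp at h⟩
      injection hm with hm; subst hm
      intro k hk
      rcases List.mem_append.mp hk with hk | hk
      · exact hb m0 hbs k hk
      · simp at hk; subst hk
        exact (not_lt.mp hc).trans (hl _)

lemma trimed_invariant (hN : 0 < N) (x : Fin N → X) (E : Fin N → ℝ)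
    (hE : ∀ i, E i = (1 / (N : ℝ)) * ∑ l, dist (x l) (x i)) (t : List (Fin N)) :
    (∀ j, (t.foldl (trimedStep x E) ⟨fun _ => 0, none⟩).l j ≤ E j) ∧
    (∀ m, (t.foldl (trimedStep x E) ⟨fun _ => 0, none⟩).best = some m →
        ∀ i ∈ t, E m ≤ E i) ∧
    ((t.foldl (trimedStep x E) ⟨fun _ => 0, none⟩).best = none → t = []) := by
  have key := trimed_key hN x E hE
  induction t using List.reverseRecOn with
  | nil =>
    refine ⟨fun j => ?_, fun m hm => ?_, fun _ => rfl⟩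
    · simp only [List.foldl_nil]
      rw [hE j]
      positivity
    · simp only [List.foldl_nil] at hm
      exact absurd hm (by simp)
  | append_singleton t i ih =>
    obtain ⟨ihl, ihb, ihn⟩ := ih
    rw [List.foldl_append]
    simp only [List.foldl_cons, List.foldl_nil]
    exact trimed_step_inv x E key _ i t ihl ihb ihn

end Aux

/-- Correctness of `trimed`: starting from lower bounds `0` and no candidate, and
folding `trimedStep` over the indices in any (shuffled) order, every maintained
lower bound satisfies `l j ≤ E j` at every stage of the execution, and the final
best candidate `m*` satisfies `E m* ≤ E j` for all `j`, i.e. `x m*` is a medoid. -/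
theorem trimed_correct {X : Type*} [MetricSpace X] (N : ℕ) (hN : 0 < N)
    (x : Fin N → X) (E : Fin N → ℝ)
    (hE : ∀ i, E i = (1 / (N : ℝ)) * ∑ l, dist (x l) (x i))
    (perm : Equiv.Perm (Fin N)) :
    (∀ t : List (Fin N), t <+: ((List.finRange N).map perm) →
        ∀ j, (t.foldl (trimedStep x E) ⟨fun _ => 0, none⟩).l j ≤ E j) ∧
      ∃ mstar : Fin N,
        (((List.finRange N).map perm).foldl (trimedStep x E)
            ⟨fun _ => 0, none⟩).best = some mstar ∧
          ∀ j, E mstar ≤ E j := by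
  obtain ⟨ihl, ihb, ihn⟩ := trimed_invariant hN x E hE ((List.finRange N).map perm)
  refine ⟨fun t _ j => (trimed_invariant hN x E hE t).1 j, ?_⟩
  rcases hb : (((List.finRange N).map perm).foldl (trimedStep x E)
      ⟨fun _ => 0, none⟩).best with _ | m
  · exfalso
    have := ihn hb
    have : ((List.finRange N).map perm).length = 0 := by rw [this]; rfl
    simp at this
    omega
  · refine ⟨m, rfl, fun j => ihb m hb j ?_⟩
    simp only [List.mem_map, List.mem_finRange]
    exact ⟨perm.symm j, trivial, perm.apply_symm_apply j⟩
end

section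
/- For x0, x1 ∈ ℝ^d with ‖x0 - x1‖ = 1, the volume of the intersection of the two unit balls B(x0,1) ∩ B(x1,1), divided by the volume of the unit ball B(x0,1), is at least (1/(d+1)) · (3/4)^(d/2). -/
open MeasureTheory Metric Set

lemma vol_sumsq (n : ℕ) {s : ℝ} (hs : 0 ≤ s) :
    volume {y : Fin n → ℝ | ∑ i, y i ^ 2 ≤ s} =
      ENNReal.ofReal (Real.sqrt s ^ n) *
        volume (closedBall (0 : EuclideanSpace ℝ (Fin n)) 1) := by
  have hmp := EuclideanSpace.volume_preserving_symm_measurableEquiv_toLp (Fin n)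
  have hmeas : MeasurableSet {y : Fin n → ℝ | ∑ i, y i ^ 2 ≤ s} :=
    measurableSet_le (by fun_prop) measurable_const
  rw [← hmp.measure_preimage hmeas.nullMeasurableSet]
  have hset : (⇑(MeasurableEquiv.toLp 2 (Fin n → ℝ)).symm) ⁻¹' {y : Fin n → ℝ | ∑ i, y i ^ 2 ≤ s}
      = closedBall (0 : EuclideanSpace ℝ (Fin n)) (Real.sqrt s) := by
    ext z
    simp only [Set.mem_preimage, Set.mem_setOf_eq, mem_closedBall, dist_zero_right,
      EuclideanSpace.norm_eq, MeasurableEquiv.toLp_symm_apply,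
      Real.norm_eq_abs, sq_abs]
    rw [Real.sqrt_le_sqrt_iff hs]
  rw [hset, Measure.addHaar_closedBall' _ _ (Real.sqrt_nonneg s), finrank_euclideanSpace_fin]

lemma vol_cap (n : ℕ) (s : Set ℝ) (hs : MeasurableSet s) (g : ℝ → ℝ) (hg : Continuous g)
    (hg0 : ∀ t ∈ s, 0 ≤ g t) :
    volume {p : ℝ × (Fin n → ℝ) | p.1 ∈ s ∧ ∑ i, p.2 i ^ 2 ≤ g p.1} =
      (∫⁻ t in s, ENNReal.ofReal (Real.sqrt (g t) ^ n)) *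
        volume (closedBall (0 : EuclideanSpace ℝ (Fin n)) 1) := by
  have hmeas : MeasurableSet {p : ℝ × (Fin n → ℝ) | p.1 ∈ s ∧ ∑ i, p.2 i ^ 2 ≤ g p.1} := by
    refine MeasurableSet.inter (measurable_fst hs) ?_
    exact measurableSet_le (by fun_prop) (hg.measurable.comp measurable_fst)
  rw [Measure.volume_eq_prod, Measure.prod_apply hmeas]
  have hslice : ∀ t : ℝ, volume (Prod.mk t ⁻¹' {p : ℝ × (Fin n → ℝ) | p.1 ∈ s ∧ ∑ i, p.2 i ^ 2 ≤ g p.1})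
      = Set.indicator s (fun t => ENNReal.ofReal (Real.sqrt (g t) ^ n) *
          volume (closedBall (0 : EuclideanSpace ℝ (Fin n)) 1)) t := by
    intro t
    by_cases ht : t ∈ s
    · rw [Set.indicator_of_mem ht]
      have : Prod.mk t ⁻¹' {p : ℝ × (Fin n → ℝ) | p.1 ∈ s ∧ ∑ i, p.2 i ^ 2 ≤ g p.1}
          = {y : Fin n → ℝ | ∑ i, y i ^ 2 ≤ g t} := by
        ext y; simp [ht]
      rw [this, vol_sumsq n (hg0 t ht)]
    · rw [Set.indicator_of_notMem ht]
      have : Prod.mk t ⁻¹' {p : ℝ × (Fin n → ℝ) | p.1 ∈ s ∧ ∑ i, p.2 i ^ 2 ≤ g p.1} = ∅ := by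
        ext y; simp [ht]
      simp [this]
  rw [lintegral_congr hslice, lintegral_indicator hs]
  exact lintegral_mul_const _ (by fun_prop)

lemma sqrt_pow_eq_rpow {x : ℝ} (hx : 0 ≤ x) (n : ℕ) :
    Real.sqrt x ^ n = x ^ ((n : ℝ) / 2) := by
  rw [Real.sqrt_eq_rpow, ← Real.rpow_natCast (x ^ (1/2 : ℝ)) n, ← Real.rpow_mul hx]
  norm_num
  ring_nf

lemma rint (n : ℕ) :
    ∫ t in (0:ℝ)..(1/2), Real.sqrt (3/2 * t) ^ n = (3/4 : ℝ) ^ ((n : ℝ) / 2) / (n + 2) := by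
  have hcong : Set.EqOn (fun t => Real.sqrt (3/2 * t) ^ n)
      (fun t => (3/2 * t) ^ ((n : ℝ) / 2)) (Set.uIcc (0:ℝ) (1/2)) := by
    intro t ht
    rw [Set.uIcc_of_le (by norm_num)] at ht
    exact sqrt_pow_eq_rpow (by nlinarith [ht.1]) n
  rw [intervalIntegral.integral_congr hcong]
  have := intervalIntegral.integral_comp_mul_left (fun x : ℝ => x ^ ((n : ℝ) / 2)) (c := 3/2)
    (a := (0:ℝ)) (b := 1/2)
  rw [this (by norm_num)]
  rw [integral_rpow (Or.inl (lt_of_lt_of_le (by norm_num : (-1:ℝ) < 0) (by positivity : (0:ℝ) ≤ (n:ℝ)/2)))]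
  have hne : (n : ℝ) / 2 + 1 ≠ 0 := by positivity
  rw [show (3/2 : ℝ) * 0 = 0 by norm_num, Real.zero_rpow hne]
  rw [show (3/2 : ℝ) * (1/2) = 3/4 by norm_num]
  rw [Real.rpow_add_one (by norm_num : (3/4:ℝ) ≠ 0)]
  have hn2 : (n : ℝ) + 2 ≠ 0 := by positivity
  field_simp
  simp only [smul_eq_mul]
  field_simp
  ring

lemma integrable_cap (n : ℕ) (a b : ℝ) (g : ℝ → ℝ) (hg : Continuous g) :
    IntegrableOn (fun t => Real.sqrt (g t) ^ n) (Set.Ioc a b) volume := by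
  have hc : Continuous fun t => Real.sqrt (g t) ^ n :=
    (Real.continuous_sqrt.comp hg).pow n
  exact (hc.integrableOn_Icc).mono_set Set.Ioc_subset_Icc_self

lemma lint2 (n : ℕ) :
    ∫⁻ t in Set.Ioc (0:ℝ) (1/2), ENNReal.ofReal (Real.sqrt (3/2 * t) ^ n) =
      ENNReal.ofReal ((3/4 : ℝ) ^ ((n : ℝ) / 2) / (n + 2)) := by
  rw [← ofReal_integral_eq_lintegral_ofReal (integrable_cap n 0 (1/2) _ (by fun_prop))
    (Filter.Eventually.of_forall fun t => by positivity)]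
  rw [← intervalIntegral.integral_of_le (by norm_num : (0:ℝ) ≤ 1/2), rint n]

lemma lint1 (n : ℕ) :
    ∫⁻ t in Set.Ioc (1/2:ℝ) 1, ENNReal.ofReal (Real.sqrt (3/2 * (1 - t)) ^ n) =
      ENNReal.ofReal ((3/4 : ℝ) ^ ((n : ℝ) / 2) / (n + 2)) := by
  rw [← ofReal_integral_eq_lintegral_ofReal (integrable_cap n (1/2) 1 _ (by fun_prop))
    (Filter.Eventually.of_forall fun t => by positivity)]
  rw [← intervalIntegral.integral_of_le (by norm_num : (1/2:ℝ) ≤ 1)]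
  have := intervalIntegral.integral_comp_sub_left (a := 1/2) (b := 1)
    (fun u : ℝ => Real.sqrt (3/2 * u) ^ n) 1
  rw [this, show (1:ℝ)-1 = 0 by norm_num, show (1:ℝ)-1/2 = 1/2 by norm_num, rint n]

set_option maxHeartbeats 2000000 in
theorem volume_ball_intersection (d : ℕ) (hd : 1 ≤ d)
    (x0 x1 : EuclideanSpace ℝ (Fin d)) (h : ‖x0 - x1‖ = 1) :
    (volume (closedBall x0 1 ∩ closedBall x1 1)).toReal /
        (volume (closedBall x0 1)).toReal ≥
      (1 / ((d : ℝ) + 1)) * (3 / 4 : ℝ) ^ ((d : ℝ) / 2) := by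
  obtain ⟨n, rfl⟩ : ∃ n, d = n + 1 := ⟨d - 1, (Nat.succ_pred_eq_of_pos hd).symm⟩
  set e0 : EuclideanSpace ℝ (Fin (n + 1)) := EuclideanSpace.single 0 1 with he0
  have hne : ‖x1 - x0‖ = ‖e0‖ := by
    rw [he0, EuclideanSpace.norm_single, norm_one, ← norm_neg, neg_sub, h]
  set f := Submodule.reflection (Submodule.span ℝ {(x1 - x0) - e0})ᗮ with hfdef
  have hf : f (x1 - x0) = e0 := Submodule.reflection_sub hne
  set g : EuclideanSpace ℝ (Fin (n + 1)) → EuclideanSpace ℝ (Fin (n + 1)) :=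
    fun z => f (z - x0) with hg
  have hgm : MeasurePreserving g volume volume :=
    (f.measurePreserving).comp (measurePreserving_sub_right volume x0)
  have hpre1 : g ⁻¹' (closedBall 0 1) = closedBall x0 1 := by
    ext z
    simp only [hg, Set.mem_preimage, mem_closedBall, dist_eq_norm, sub_zero]
    rw [f.norm_map]
  have hpre2 : g ⁻¹' (closedBall e0 1) = closedBall x1 1 := by
    ext z
    simp only [hg, Set.mem_preimage, mem_closedBall, dist_eq_norm]
    rw [← hf, ← f.map_sub, f.norm_map, show z - x0 - (x1 - x0) = z - x1 by abel]
  have hv1 : volume (closedBall x0 1 ∩ closedBall x1 1) =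
      volume (closedBall (0 : EuclideanSpace ℝ (Fin (n + 1))) 1 ∩ closedBall e0 1) := by
    rw [← hpre1, ← hpre2, ← Set.preimage_inter, hgm.measure_preimage
      ((measurableSet_closedBall.inter measurableSet_closedBall).nullMeasurableSet)]
  have hv0 : volume (closedBall x0 1) = volume (closedBall (0 : EuclideanSpace ℝ (Fin (n + 1))) 1) := by
    rw [← hpre1, hgm.measure_preimage measurableSet_closedBall.nullMeasurableSet]
  rw [hv1, hv0]
  clear hv1 hv0 hpre1 hpre2 hgm hg hf hfdef hne h
  -- transfer to ℝ × (Fin n → ℝ)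
  set ψ : EuclideanSpace ℝ (Fin (n+1)) → ℝ × (Fin n → ℝ) :=
    fun z => (MeasurableEquiv.piFinSuccAbove (fun _ : Fin (n+1) => ℝ) 0)
      ((MeasurableEquiv.toLp 2 (Fin (n+1) → ℝ)).symm z) with hψ
  have hψm : MeasurePreserving ψ volume volume :=
    (volume_preserving_piFinSuccAbove (fun _ : Fin (n+1) => ℝ) 0).comp
      (EuclideanSpace.volume_preserving_symm_measurableEquiv_toLp (Fin (n+1)))
  set BallS : Set (ℝ × (Fin n → ℝ)) := {p | p.1 ^ 2 + ∑ i, p.2 i ^ 2 ≤ 1} with hBallS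
  set BallS' : Set (ℝ × (Fin n → ℝ)) := {p | (p.1 - 1) ^ 2 + ∑ i, p.2 i ^ 2 ≤ 1} with hBallS'
  have hBmeas : MeasurableSet BallS := measurableSet_le (by fun_prop) measurable_const
  have hBmeas' : MeasurableSet BallS' := measurableSet_le (by fun_prop) measurable_const
  have hψz : ∀ z : EuclideanSpace ℝ (Fin (n+1)),
      ψ z = (z 0, fun i => z (Fin.succAbove 0 i)) := fun z => rfl
  have hball0 : ∀ z : EuclideanSpace ℝ (Fin (n+1)),
      z ∈ closedBall (0 : EuclideanSpace ℝ (Fin (n+1))) 1 ↔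
        (z 0) ^ 2 + ∑ i, z (Fin.succAbove 0 i) ^ 2 ≤ 1 := by
    intro z
    rw [mem_closedBall, dist_zero_right, EuclideanSpace.norm_eq,
      show (1:ℝ) = Real.sqrt 1 from (Real.sqrt_one).symm, Real.sqrt_le_sqrt_iff zero_le_one,
      Fin.sum_univ_succAbove (fun i => ‖z i‖ ^ 2) 0]
    simp [Real.norm_eq_abs, sq_abs]
  have hball1 : ∀ z : EuclideanSpace ℝ (Fin (n+1)),
      z ∈ closedBall e0 1 ↔ (z 0 - 1) ^ 2 + ∑ i, z (Fin.succAbove 0 i) ^ 2 ≤ 1 := by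
    intro z
    rw [mem_closedBall, EuclideanSpace.dist_eq,
      show (1:ℝ) = Real.sqrt 1 from (Real.sqrt_one).symm, Real.sqrt_le_sqrt_iff zero_le_one,
      Fin.sum_univ_succAbove (fun i => dist (z i) (e0 i) ^ 2) 0]
    have h00 : e0 0 = 1 := by simp [he0, EuclideanSpace.single_apply]
    have hsa : ∀ i : Fin n, e0 i.succ = 0 := by
      intro i
      simp [he0, EuclideanSpace.single_apply, Fin.succ_ne_zero]
    simp [h00, hsa, Real.dist_eq, sq_abs, sub_zero, Fin.succAbove_zero]
  have hw1 : volume (closedBall (0 : EuclideanSpace ℝ (Fin (n+1))) 1 ∩ closedBall e0 1) =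
      volume (BallS ∩ BallS') := by
    rw [← hψm.measure_preimage ((hBmeas.inter hBmeas').nullMeasurableSet)]
    congr 1
    ext z
    simp only [Set.preimage_inter, Set.mem_inter_iff, Set.mem_preimage, hBallS, hBallS',
      Set.mem_setOf_eq, hball0 z, hball1 z, hψz z]
  have hw0 : volume (closedBall (0 : EuclideanSpace ℝ (Fin (n+1))) 1) = volume BallS := by
    rw [← hψm.measure_preimage hBmeas.nullMeasurableSet]
    congr 1
    ext z
    simp only [Set.mem_preimage, hBallS, Set.mem_setOf_eq, hball0 z, hψz z]
  rw [hw1, hw0]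
  set c := volume (closedBall (0 : EuclideanSpace ℝ (Fin n)) 1) with hc
  have hcpos : 0 < c :=
    lt_of_lt_of_le (measure_ball_pos volume 0 one_pos) (measure_mono ball_subset_closedBall)
  have hcfin : c ≠ ⊤ := measure_closedBall_lt_top.ne
  set I : ℝ := (3/4 : ℝ) ^ ((n : ℝ) / 2) / (n + 2) with hI
  have hIpos : 0 < I := by positivity
  set cap1 : Set (ℝ × (Fin n → ℝ)) :=
    {p | p.1 ∈ Set.Ioc (1/2 : ℝ) 1 ∧ ∑ i, p.2 i ^ 2 ≤ 3/2 * (1 - p.1)} with hcap1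
  set cap2 : Set (ℝ × (Fin n → ℝ)) :=
    {p | p.1 ∈ Set.Ioc (0 : ℝ) (1/2) ∧ ∑ i, p.2 i ^ 2 ≤ 3/2 * p.1} with hcap2
  have hv_cap1 : volume cap1 = ENNReal.ofReal I * c := by
    have := vol_cap n (Set.Ioc (1/2 : ℝ) 1) measurableSet_Ioc (fun t => 3/2 * (1 - t))
      (by fun_prop) (fun t ht => by nlinarith [ht.2])
    rw [hcap1, this, lint1 n, hI, hc]
  have hv_cap2 : volume cap2 = ENNReal.ofReal I * c := by
    have := vol_cap n (Set.Ioc (0 : ℝ) (1/2)) measurableSet_Ioc (fun t => 3/2 * t)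
      (by fun_prop) (fun t ht => by nlinarith [ht.1.le])
    rw [hcap2, this, lint2 n, hI, hc]
  have hm2 : MeasurableSet cap2 := by
    have hce : cap2 = (Prod.fst ⁻¹' Set.Ioc (0:ℝ) (1/2)) ∩
        {p : ℝ × (Fin n → ℝ) | ∑ i, p.2 i ^ 2 ≤ 3/2 * p.1} := rfl
    rw [hce]
    exact (measurableSet_Ioc.preimage measurable_fst).inter
      (measurableSet_le (by fun_prop) (by fun_prop))
  have hdisj : Disjoint cap1 cap2 := by
    rw [Set.disjoint_left]
    rintro p ⟨h1, _⟩ ⟨h2, _⟩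
    exact absurd h1.1 (not_lt.2 h2.2)
  have hsub : cap1 ∪ cap2 ⊆ BallS ∩ BallS' := by
    rintro p (⟨ht, hy⟩ | ⟨ht, hy⟩) <;>
      refine ⟨?_, ?_⟩ <;> simp only [hBallS, hBallS', Set.mem_setOf_eq] <;>
      nlinarith [ht.1, ht.2, hy]
  have hnum : ENNReal.ofReal I * c + ENNReal.ofReal I * c ≤ volume (BallS ∩ BallS') := by
    calc ENNReal.ofReal I * c + ENNReal.ofReal I * c = volume cap1 + volume cap2 := by
          rw [hv_cap1, hv_cap2]
      _ = volume (cap1 ∪ cap2) := (measure_union hdisj hm2).symm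
      _ ≤ volume (BallS ∩ BallS') := measure_mono hsub
  have hden : volume BallS ≤ ENNReal.ofReal 2 * c := by
    have hsub2 : BallS ⊆ Set.Icc (-1:ℝ) 1 ×ˢ {y : Fin n → ℝ | ∑ i, y i ^ 2 ≤ 1} := by
      rintro p hp
      simp only [hBallS, Set.mem_setOf_eq] at hp
      have hsumnn : 0 ≤ ∑ i, p.2 i ^ 2 := Finset.sum_nonneg fun i _ => sq_nonneg _
      refine ⟨⟨by nlinarith, by nlinarith⟩, ?_⟩
      simp only [Set.mem_setOf_eq]
      nlinarith
    calc volume BallS ≤ volume (Set.Icc (-1:ℝ) 1 ×ˢ {y : Fin n → ℝ | ∑ i, y i ^ 2 ≤ 1}) :=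
          measure_mono hsub2
      _ = ENNReal.ofReal 2 * c := by
          rw [Measure.volume_eq_prod, Measure.prod_prod, Real.volume_Icc,
            vol_sumsq n zero_le_one, ← hc]
          norm_num
  have hICfin : ENNReal.ofReal I * c ≠ ⊤ := ENNReal.mul_ne_top ENNReal.ofReal_ne_top hcfin
  have h2Cfin : ENNReal.ofReal 2 * c ≠ ⊤ := ENNReal.mul_ne_top ENNReal.ofReal_ne_top hcfin
  have hDfin : volume BallS ≠ ⊤ := ne_top_of_le_ne_top h2Cfin hden
  have hNfin : volume (BallS ∩ BallS') ≠ ⊤ :=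
    ne_top_of_le_ne_top hDfin (measure_mono Set.inter_subset_left)
  set cr := c.toReal with hcr
  have hcrpos : 0 < cr := ENNReal.toReal_pos hcpos.ne' hcfin
  have hNlb : 2 * I * cr ≤ (volume (BallS ∩ BallS')).toReal := by
    have h1 := ENNReal.toReal_mono hNfin hnum
    rw [ENNReal.toReal_add hICfin hICfin, ENNReal.toReal_mul,
      ENNReal.toReal_ofReal hIpos.le] at h1
    linarith
  have hDub : (volume BallS).toReal ≤ 2 * cr := by
    have h1 := ENNReal.toReal_mono h2Cfin hden
    rwa [ENNReal.toReal_mul, ENNReal.toReal_ofReal (by norm_num : (0:ℝ) ≤ 2)] at h1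
  have hDpos : 0 < (volume BallS).toReal := by
    have hle : (volume (BallS ∩ BallS')).toReal ≤ (volume BallS).toReal :=
      ENNReal.toReal_mono hDfin (measure_mono Set.inter_subset_left)
    nlinarith
  rw [ge_iff_le]
  have hchain : 2 * I * cr / (2 * cr) ≤
      (volume (BallS ∩ BallS')).toReal / (volume BallS).toReal := by
    have hN0 : (0:ℝ) ≤ 2 * I * cr :=
      mul_nonneg (mul_nonneg (by norm_num) hIpos.le) ENNReal.toReal_nonneg
    exact div_le_div₀ (hN0.trans hNlb) hNlb hDpos hDub
  have heq : 2 * I * cr / (2 * cr) = I := by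
    rw [show 2 * I * cr = I * (2 * cr) by ring, mul_div_assoc,
      div_self (mul_pos two_pos hcrpos).ne', mul_one]
  refine le_trans ?_ hchain
  rw [heq, hI]
  push_cast
  have hrp : (3/4 : ℝ) ^ (((n:ℝ)+1)/2) ≤ (3/4 : ℝ) ^ ((n:ℝ)/2) :=
    Real.rpow_le_rpow_of_exponent_ge (by norm_num) (by norm_num)
      (by have := (n:ℝ); linarith [Nat.cast_nonneg (α := ℝ) n])
  rw [show (1:ℝ) / ((n:ℝ)+1+1) * (3/4 : ℝ) ^ (((n:ℝ)+1)/2)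
      = (3/4 : ℝ) ^ (((n:ℝ)+1)/2) / ((n:ℝ)+2) by ring]
  gcongr
end

section
/- For every x in the annulus A(0, r, r+w) in ℝ^d with 0 < ε ≤ w, the volume of B(x, ε/2) ∩ A(0, r, r+w) is strictly greater than (1/(d+1)) · (3/4)^{d/2} · V_d(ε/2), where V_d(ρ) is the volume of a d-ball of radius ρ. -/
set_option maxHeartbeats 1000000


open MeasureTheory Metric

/-- `Vball n r` is the Lebesgue volume of an `n`-dimensional Euclidean ball of
radius `r`: `r ^ n * π ^ (n / 2) / Γ (n / 2 + 1)`. -/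
noncomputable def Vball (n : ℕ) (r : ℝ) : ℝ :=
  r ^ n * Real.pi ^ ((n : ℝ) / 2) / Real.Gamma ((n : ℝ) / 2 + 1)

lemma Vball_pos (n : ℕ) (r : ℝ) (hr : 0 < r) : 0 < Vball n r := by
  unfold Vball
  apply div_pos
  · positivity
  · exact Real.Gamma_pos_of_pos (by positivity)

lemma vol_closedBall_toReal (d : ℕ) (hd : 1 ≤ d) (x : EuclideanSpace ℝ (Fin d)) (a : ℝ)
    (ha : 0 ≤ a) : (volume (closedBall x a)).toReal = Vball d a := by
  haveI : Nonempty (Fin d) := ⟨⟨0, hd⟩⟩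
  rw [EuclideanSpace.volume_closedBall]
  rw [ENNReal.toReal_mul, ENNReal.toReal_pow, ENNReal.toReal_ofReal ha,
    ENNReal.toReal_ofReal (by positivity), Fintype.card_fin]
  unfold Vball
  rw [Real.sqrt_eq_rpow, ← Real.rpow_natCast (Real.pi ^ ((1:ℝ)/2)) d,
    ← Real.rpow_mul Real.pi_nonneg]
  ring_nf

lemma le_of_sq_le_sq' (a b : ℝ) (ha : 0 ≤ a) (hb : 0 ≤ b) (h : a^2 ≤ b^2) : a ≤ b := by
  by_contra hc
  push_neg at hc
  exact absurd h (not_le.2 (pow_lt_pow_left₀ hc hb two_ne_zero))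

open RealInnerProductSpace in
lemma half_ball_vol (d : ℕ) (x u : EuclideanSpace ℝ (Fin d)) (a : ℝ) :
    volume (closedBall x a) ≤
      2 * volume (closedBall x a ∩ {y | 0 ≤ ⟪y - x, u⟫}) := by
  set S := closedBall x a ∩ {y | 0 ≤ ⟪y - x, u⟫} with hS
  have hmeas : MeasurableSet S := by
    apply measurableSet_closedBall.inter
    exact (isClosed_le continuous_const ((continuous_id.sub continuous_const).inner
      continuous_const)).measurableSet
  set S' := closedBall x a ∩ {y | ⟪y - x, u⟫ ≤ 0} with hS'
  have hcover : closedBall x a ⊆ S ∪ S' := by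
    intro y hy
    rcases le_total 0 ⟪y - x, u⟫ with h | h
    · exact Or.inl ⟨hy, h⟩
    · exact Or.inr ⟨hy, h⟩
  have hmp : MeasurePreserving (fun t : EuclideanSpace ℝ (Fin d) => (x + x) - t)
      volume volume := Measure.measurePreserving_sub_left volume (x + x)
  have him : S' = (fun t : EuclideanSpace ℝ (Fin d) => (x + x) - t) ⁻¹' S := by
    ext y
    have h1 : (x + x) - y - x = x - y := by abel
    simp only [hS, hS', Set.mem_inter_iff, Set.mem_preimage, Set.mem_setOf_eq,
      mem_closedBall, dist_eq_norm, h1]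
    rw [norm_sub_rev, show x - y = -(y - x) by abel, inner_neg_left]
    constructor
    · rintro ⟨h2, h3⟩; exact ⟨h2, by linarith⟩
    · rintro ⟨h2, h3⟩; exact ⟨h2, by linarith⟩
  have hvol' : volume S' = volume S := by
    rw [him]; exact hmp.measure_preimage hmeas.nullMeasurableSet
  calc volume (closedBall x a) ≤ volume (S ∪ S') := measure_mono hcover
    _ ≤ volume S + volume S' := measure_union_le _ _
    _ = 2 * volume S := by rw [hvol', two_mul]


lemma sqrt3_lt : Real.sqrt 3 < 9/5 := by
  nlinarith [Real.sq_sqrt (show (3:ℝ) ≥ 0 by norm_num), Real.sqrt_nonneg 3]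

lemma caseB_bounds (a τ n2 t P : ℝ) (ha : 0 < a) (hτn2 : τ * τ ≤ n2) (hn2 : n2 ≤ 1)
    (hP : P = 3/4 * a^2 * (n2 - τ * τ)) (ht : t = a * (17/50 - 3/10 * τ)) :
    0 ≤ t ∧ t ≤ a ∧ t^2 + P ≤ a^2 ∧ P ≤ 3 * a * t := by
  subst hP ht
  have hτ1 : τ * τ ≤ 1 := le_trans hτn2 hn2
  have h1 : -1 ≤ τ := by nlinarith
  have h2 : τ ≤ 1 := by nlinarith
  refine ⟨by nlinarith, by nlinarith, ?_, ?_⟩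
  · nlinarith [sq_nonneg (a*(330*τ + 51)), sq_nonneg a, mul_pos ha ha,
      mul_le_mul_of_nonneg_left hn2 (sq_nonneg a)]
  · nlinarith [sq_nonneg (a*(5*τ - 3)), sq_nonneg a, mul_pos ha ha,
      mul_le_mul_of_nonneg_left hn2 (sq_nonneg a)]

lemma caseB_bounds1 (a τ t : ℝ) (ha : 0 < a) (hτ1 : τ * τ ≤ 1)
    (ht : t = a * (1/2 - τ/2)) :
    0 ≤ t ∧ t ≤ a ∧ t^2 ≤ a^2 ∧ (0:ℝ) ≤ 3 * a * t := by
  have h1 : -1 ≤ τ := by nlinarith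
  have h2 : τ ≤ 1 := by nlinarith
  have k1 : 0 ≤ t := by nlinarith
  have k2 : t ≤ a := by nlinarith
  exact ⟨k1, k2, by nlinarith, by nlinarith⟩

lemma caseB_outer (s R t a P : ℝ) (h1 : 0 ≤ s - t) (h2 : s ≤ R) (h3 : P ≤ 3*a*t)
    (h4 : 0 ≤ t) (h5 : t ≤ a) (h6 : 2*a ≤ R) : (s - t)^2 + P ≤ R^2 := by
  have h7 : (s-t)^2 ≤ (R-t)^2 := by nlinarith
  nlinarith [mul_nonneg h4 (show (0:ℝ) ≤ 2*R - 3*a - t by linarith)]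

open RealInnerProductSpace in
theorem annulus_ball_intersection_volume (d : ℕ) (hd : 1 ≤ d)
    (r w ε : ℝ) (hr : 0 ≤ r) (hε : 0 < ε) (hεw : ε ≤ w)
    (x : EuclideanSpace ℝ (Fin d)) (hx : r ≤ ‖x‖ ∧ ‖x‖ ≤ r + w) :
    (volume (closedBall x (ε / 2) ∩ {y : EuclideanSpace ℝ (Fin d) |
        r ≤ ‖y‖ ∧ ‖y‖ ≤ r + w})).toReal >
      (1 / ((d : ℝ) + 1)) * (3 / 4 : ℝ) ^ ((d : ℝ) / 2) * Vball d (ε / 2) := by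
  classical
  haveI : NeZero d := ⟨by omega⟩
  obtain ⟨hxr, hxR⟩ := hx
  set a : ℝ := ε / 2 with ha_def
  have ha : 0 < a := by positivity
  set s : ℝ := ‖x‖ with hs_def
  set R : ℝ := r + w with hR_def
  have hw2a : 2 * a ≤ w := by rw [ha_def]; linarith
  have hR2a : 2 * a ≤ R := by rw [hR_def]; linarith
  set Ann : Set (EuclideanSpace ℝ (Fin d)) := {y : EuclideanSpace ℝ (Fin d) | r ≤ ‖y‖ ∧ ‖y‖ ≤ r + w} with hAnn
  set tgt : ℝ := (1 / ((d : ℝ) + 1)) * (3 / 4 : ℝ) ^ ((d : ℝ) / 2) * Vball d a with htgt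
  show tgt < (volume (closedBall x a ∩ Ann)).toReal
  have hfin : volume (closedBall x a ∩ Ann) ≠ ⊤ :=
    ne_top_of_le_ne_top measure_closedBall_lt_top.ne (measure_mono Set.inter_subset_left)
  have reduce : ∀ S : Set (EuclideanSpace ℝ (Fin d)), S ⊆ closedBall x a ∩ Ann → tgt < (volume S).toReal →
      tgt < (volume (closedBall x a ∩ Ann)).toReal := fun S hsub hlt =>
    lt_of_lt_of_le hlt (ENNReal.toReal_mono hfin (measure_mono hsub))
  -- basic positivity facts
  have hV1 : 0 < Vball d 1 := Vball_pos d 1 one_pos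
  have hVa : 0 < Vball d a := Vball_pos d a ha
  have hd1R : (2:ℝ) ≤ (d:ℝ) + 1 := by
    have : (1:ℝ) ≤ (d:ℝ) := by exact_mod_cast hd
    linarith
  by_cases hcase : s + a ≤ R
  · -- Case A : half-ball
    have hex : ∃ u : EuclideanSpace ℝ (Fin d), ‖u‖ = 1 ∧ ⟪x, u⟫ = s := by
      rcases eq_or_ne x 0 with h | h
      · refine ⟨EuclideanSpace.single 0 1, by simp, by simp [hs_def, h]⟩
      · refine ⟨‖x‖⁻¹ • x, ?_, ?_⟩
        · rw [norm_smul, norm_inv, norm_norm, inv_mul_cancel₀ (norm_ne_zero_iff.2 h)]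
        · rw [real_inner_smul_right, real_inner_self_eq_norm_sq, hs_def]
          rw [pow_two, inv_mul_cancel_left₀ (norm_ne_zero_iff.2 h)]
    obtain ⟨u, hu1, hu2⟩ := hex
    set S := closedBall x a ∩ {y : EuclideanSpace ℝ (Fin d) | 0 ≤ ⟪y - x, u⟫} with hSdef
    have hsub : S ⊆ closedBall x a ∩ Ann := by
      rintro y ⟨hy1, hy2⟩
      refine ⟨hy1, ?_, ?_⟩
      · have h1 : ⟪y, u⟫ = ⟪x, u⟫ + ⟪y - x, u⟫ := by
          rw [← inner_add_left]; congr 1; abel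
        have h2 : ⟪y, u⟫ ≤ ‖y‖ * ‖u‖ := real_inner_le_norm y u
        rw [hu1, mul_one] at h2
        have hy2' : (0:ℝ) ≤ ⟪y - x, u⟫ := hy2
        have : s ≤ ⟪y, u⟫ := by rw [h1, hu2]; linarith
        linarith [hxr]
      · have h3 : ‖y - x‖ ≤ a := by rwa [mem_closedBall, dist_eq_norm] at hy1
        have h4 : ‖y‖ ≤ ‖x‖ + ‖y - x‖ := by
          calc ‖y‖ = ‖x + (y - x)‖ := by congr 1; abel
            _ ≤ ‖x‖ + ‖y - x‖ := norm_add_le _ _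
        have h5 : ‖x‖ = s := hs_def.symm
        rw [← hR_def]
        linarith
    apply reduce S hsub
    -- volume bound
    have hSfin : volume S ≠ ⊤ :=
      ne_top_of_le_ne_top measure_closedBall_lt_top.ne (measure_mono Set.inter_subset_left)
    have hhalf := half_ball_vol d x u a
    have h2fin : 2 * volume S ≠ ⊤ := ENNReal.mul_ne_top (by norm_num) hSfin
    have h5 : (volume (closedBall x a)).toReal ≤ (2 * volume S).toReal :=
      ENNReal.toReal_mono h2fin hhalf
    rw [vol_closedBall_toReal d hd x a ha.le, ENNReal.toReal_mul,
      ENNReal.toReal_ofNat] at h5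
    have h6 : Vball d a / 2 ≤ (volume S).toReal := by linarith
    have h34 : (3 / 4 : ℝ) ^ ((d : ℝ) / 2) < 1 := by
      apply Real.rpow_lt_one (by norm_num) (by norm_num)
      have : (1:ℝ) ≤ (d:ℝ) := by exact_mod_cast hd
      linarith
    have h34pos : 0 < (3 / 4 : ℝ) ^ ((d : ℝ) / 2) := Real.rpow_pos_of_pos (by norm_num) _
    have h1d : 1 / ((d : ℝ) + 1) ≤ 1 / 2 := by
      apply one_div_le_one_div_of_le <;> linarith
    have : tgt < Vball d a / 2 := by
      rw [htgt]
      have : (1 / ((d : ℝ) + 1)) * (3 / 4 : ℝ) ^ ((d : ℝ) / 2) < 1/2 := by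
        calc (1 / ((d : ℝ) + 1)) * (3 / 4 : ℝ) ^ ((d : ℝ) / 2)
            < (1 / ((d : ℝ) + 1)) * 1 := by
              apply mul_lt_mul_of_pos_left h34; positivity
          _ ≤ 1/2 := by rw [mul_one]; exact h1d
      have := mul_lt_mul_of_pos_right this hVa
      linarith
    linarith
  · -- Case B : ellipsoid
    push_neg at hcase
    have hsgt : r + a < s := by
      have : r + 2 * a ≤ R := by rw [hR_def]; linarith
      linarith
    have hsle : s ≤ R := hxR
    have hspos : 0 < s := by linarith
    have hx0 : x ≠ 0 := by
      intro h; rw [hs_def, h, norm_zero] at hspos; exact lt_irrefl _ hspos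
    set u : EuclideanSpace ℝ (Fin d) := ‖x‖⁻¹ • x with hu_def
    have hu1 : ‖u‖ = 1 := by
      rw [hu_def, norm_smul, norm_inv, norm_norm, inv_mul_cancel₀ (norm_ne_zero_iff.2 hx0)]
    have hxu : x = s • u := by
      rw [hu_def, smul_smul, hs_def, mul_inv_cancel₀ (norm_ne_zero_iff.2 hx0), one_smul]
    have huu : ⟪u, u⟫ = 1 := by
      rw [real_inner_self_eq_norm_sq, hu1]; norm_num
    set e0 : EuclideanSpace ℝ (Fin d) := EuclideanSpace.single (0 : Fin d) (1:ℝ) with he0_def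
    have he0 : ‖e0‖ = 1 := by rw [he0_def, EuclideanSpace.norm_single]; norm_num
    set T := Submodule.reflection (ℝ ∙ (e0 - u))ᗮ with hT_def
    have hTe0 : T e0 = u := Submodule.reflection_sub (by rw [he0, hu1])
    set γ : ℝ := if d = 1 then 1/2 else 3/10 with hγ_def
    set t₀ : ℝ := if d = 1 then 1/2 else 17/50 with ht₀_def
    set β : ℝ := Real.sqrt 3 / 2 with hβ_def
    have hβpos : 0 < β := by rw [hβ_def]; positivity
    have hβsq : β ^ 2 = 3/4 := by
      rw [hβ_def, div_pow, Real.sq_sqrt (by norm_num : (3:ℝ) ≥ 0)]; norm_num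
    have hγpos : 0 < γ := by rw [hγ_def]; split <;> norm_num
    have hγle : γ ≤ 1/2 := by rw [hγ_def]; split <;> norm_num
    have ht₀pos : 0 < t₀ := by rw [ht₀_def]; split <;> norm_num
    set v : Fin d → ℝ := fun i => if i = 0 then γ * a else β * a with hv_def
    set D := Matrix.toEuclideanLin (Matrix.diagonal v) with hD_def
    have hDapp : ∀ (z : EuclideanSpace ℝ (Fin d)) (i : Fin d), D z i = v i * z i := by
      intro z i
      rw [hD_def, Matrix.toEuclideanLin_apply]
      simp [Matrix.mulVec_diagonal]
    set c : EuclideanSpace ℝ (Fin d) := x - (t₀ * a) • u with hc_def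
    set S : Set (EuclideanSpace ℝ (Fin d)) := (fun z => c + T (D z)) '' closedBall (0 : EuclideanSpace ℝ (Fin d)) 1 with hS_def
    -- subset
    have hsub : S ⊆ closedBall x a ∩ Ann := by
      rintro y ⟨z, hz, rfl⟩
      rw [mem_closedBall, dist_zero_right] at hz
      set τ : ℝ := z 0 with hτ_def
      set n2 : ℝ := ∑ i, z i * z i with hn2_def
      have hn2norm : n2 = ‖z‖ ^ 2 := by
        rw [hn2_def, ← real_inner_self_eq_norm_sq]
        simp only [PiLp.inner_apply, RCLike.inner_apply, conj_trivial]
      have hsplit : ∀ f : Fin d → ℝ,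
          ∑ i, f i = f 0 + ∑ i ∈ Finset.univ.erase 0, f i :=
        fun f => (Finset.add_sum_erase _ f (Finset.mem_univ 0)).symm
      have hτn2 : τ * τ ≤ n2 := by
        rw [hn2_def, hτ_def]
        exact Finset.single_le_sum (fun i _ => mul_self_nonneg (z i)) (Finset.mem_univ 0)
      have hn2le : n2 ≤ 1 := by
        rw [hn2norm]
        exact pow_le_one₀ (norm_nonneg z) hz
      set g : ℝ := γ * a * τ with hg_def
      set t : ℝ := t₀ * a - g with ht_def
      set P : ℝ := (β * a) ^ 2 * (n2 - τ * τ) with hP_def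
      have hP0 : 0 ≤ P := by
        rw [hP_def]
        apply mul_nonneg (sq_nonneg _)
        linarith
      -- inner product of image with u
      have hg' : ⟪T (D z), u⟫ = g := by
        rw [← hTe0, T.inner_map_map]
        have : ⟪D z, e0⟫ = D z 0 := by
          rw [he0_def]
          simp [EuclideanSpace.inner_single_right]
        rw [this, hDapp z 0, hg_def, hv_def]
        simp [hτ_def]
      -- norm of image
      have hnormsq : ‖T (D z)‖ ^ 2 = g * g + P := by
        rw [T.norm_map, ← real_inner_self_eq_norm_sq]
        have h1 : ⟪D z, D z⟫ = ∑ i, (v i * z i) * (v i * z i) := by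
          simp only [PiLp.inner_apply, RCLike.inner_apply, starRingEnd_apply, star_trivial]
          exact Finset.sum_congr rfl fun i _ => by rw [hDapp z i]
        rw [h1, hsplit (fun i => (v i * z i) * (v i * z i))]
        have h2 : ∀ i ∈ Finset.univ.erase (0 : Fin d),
            (v i * z i) * (v i * z i) = (β * a)^2 * (z i * z i) := by
          intro i hi
          rw [hv_def]; simp only [if_neg (Finset.ne_of_mem_erase hi)]; ring
        rw [Finset.sum_congr rfl h2, ← Finset.mul_sum]
        have h3 : ∑ i ∈ Finset.univ.erase (0 : Fin d), z i * z i = n2 - τ * τ := by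
          have := hsplit (fun i => z i * z i)
          rw [hn2_def, hτ_def]; linarith [this]
        rw [h3, show v 0 = γ * a by simp [hv_def], hg_def, hP_def, hτ_def]
      -- scalar bounds
      have hbounds : 0 ≤ t ∧ t ≤ a ∧ t^2 + P ≤ a^2 ∧ P ≤ 3 * a * t := by
        have hPa : P = 3/4 * a^2 * (n2 - τ * τ) := by
          rw [hP_def, mul_pow, hβsq]
        rcases eq_or_ne d 1 with hd1 | hd1
        · -- d = 1 : no perpendicular directions
          have herase : (Finset.univ.erase (0 : Fin d)) = ∅ := by
            apply Finset.card_eq_zero.1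
            rw [Finset.card_erase_of_mem (Finset.mem_univ 0), Finset.card_univ,
              Fintype.card_fin, hd1]
          have hn2τ : n2 = τ * τ := by
            have := hsplit (fun i => z i * z i)
            rw [herase, Finset.sum_empty, add_zero] at this
            rw [hn2_def, hτ_def]; linarith [this]
          have hPz : P = 0 := by rw [hPa, hn2τ]; ring
          have htval : t = a * (1/2 - τ/2) := by
            rw [ht_def, hg_def, hγ_def, ht₀_def, if_pos hd1, if_pos hd1]; ring
          obtain ⟨k1, k2, k3, k4⟩ := caseB_bounds1 a τ t ha
            (by rw [← hn2τ]; exact hn2le) htval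
          exact ⟨k1, k2, by rw [hPz]; linarith, by rw [hPz]; linarith⟩
        · have htval : t = a * (17/50 - 3/10 * τ) := by
            rw [ht_def, hg_def, hγ_def, ht₀_def, if_neg hd1, if_neg hd1]; ring
          exact caseB_bounds a τ n2 t P ha hτn2 hn2le hPa htval
      obtain ⟨kb1, kb2, kb3, kb4⟩ := hbounds
      -- geometry
      set y : EuclideanSpace ℝ (Fin d) := c + T (D z) with hy_def
      have hyx : y - x = T (D z) - (t₀ * a) • u := by
        rw [hy_def, hc_def]; abel
      have hyx_sq : ‖y - x‖ ^ 2 = t ^ 2 + P := by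
        rw [hyx, norm_sub_sq_real, real_inner_smul_right, hg', hnormsq,
          norm_smul, hu1]
        rw [ht_def]
        have : |t₀ * a| = t₀ * a := abs_of_nonneg (by positivity)
        rw [Real.norm_eq_abs, this]
        ring
      have hy_sq : ‖y‖ ^ 2 = (s - t) ^ 2 + P := by
        have h1 : y = x + (y - x) := by abel
        rw [h1, norm_add_sq_real, hyx]
        rw [inner_sub_right, real_inner_smul_right]
        have h2 : ⟪x, T (D z)⟫ = s * g := by
          rw [hxu, real_inner_smul_left, real_inner_comm, hg']
        have h3 : ⟪x, u⟫ = s := by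
          rw [hxu, real_inner_smul_left, huu, mul_one]
        rw [h2, h3, ← hyx, hyx_sq, hs_def]
        rw [← hs_def, ht_def]
        ring
      have hyx_le : ‖y - x‖ ≤ a := by
        apply le_of_sq_le_sq' _ _ (norm_nonneg _) ha.le
        rw [hyx_sq]; linarith
      have hst0 : 0 ≤ s - t := by linarith
      have hrley : r ≤ ‖y‖ := by
        have h1 : s - t ≤ ‖y‖ := by
          apply le_of_sq_le_sq' _ _ hst0 (norm_nonneg _)
          rw [hy_sq]; linarith [hP0]
        linarith
      have hyleR : ‖y‖ ≤ R := by
        apply le_of_sq_le_sq' _ _ (norm_nonneg _) (by linarith : (0:ℝ) ≤ R)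
        rw [hy_sq]
        exact caseB_outer s R t a P hst0 hsle kb4 kb1 kb2 hR2a
      exact ⟨by rwa [mem_closedBall, dist_eq_norm], hrley, by rwa [← hR_def]⟩
    apply reduce S hsub
    -- volume of S
    have hdet : LinearMap.det (D : EuclideanSpace ℝ (Fin d) →ₗ[ℝ] EuclideanSpace ℝ (Fin d)) = (γ * a) * (β * a) ^ (d - 1) := by
      rw [hD_def, Matrix.toEuclideanLin_eq_toLin, LinearMap.det_toLin, Matrix.det_diagonal]
      rw [← Finset.mul_prod_erase Finset.univ v (Finset.mem_univ 0)]
      rw [show v 0 = γ * a by simp [hv_def]]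
      rw [Finset.prod_congr rfl (fun i hi =>
          show v i = β * a by simp [hv_def, Finset.ne_of_mem_erase hi]),
        Finset.prod_const, Finset.card_erase_of_mem (Finset.mem_univ 0),
        Finset.card_univ, Fintype.card_fin]
    have hdetpos : 0 < (γ * a) * (β * a) ^ (d - 1) :=
      mul_pos (mul_pos hγpos ha) (pow_pos (mul_pos hβpos ha) _)
    have hcompact : IsCompact (⇑T '' (⇑D '' closedBall (0 : EuclideanSpace ℝ (Fin d)) 1)) :=
      ((isCompact_closedBall (0 : EuclideanSpace ℝ (Fin d)) 1).image (LinearMap.continuous_of_finiteDimensional D)).image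
        T.continuous
    have hmeas2 : MeasurableSet (⇑T '' (⇑D '' closedBall (0 : EuclideanSpace ℝ (Fin d)) 1)) :=
      hcompact.measurableSet
    have hmeasD : MeasurableSet (⇑D '' closedBall (0 : EuclideanSpace ℝ (Fin d)) 1) :=
      ((isCompact_closedBall (0 : EuclideanSpace ℝ (Fin d)) 1).image
        (LinearMap.continuous_of_finiteDimensional D)).measurableSet
    have hvolS : volume S = ENNReal.ofReal ((γ * a) * (β * a) ^ (d - 1)) *
        volume (closedBall (0 : EuclideanSpace ℝ (Fin d)) 1) := by
      have h1 : S = (fun w => c + w) '' (⇑T '' (⇑D '' closedBall (0 : EuclideanSpace ℝ (Fin d)) 1)) := by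
        rw [hS_def, Set.image_image, Set.image_image]
      rw [h1, Set.image_add_left, measure_preimage_add]
      have h2 : ⇑T '' (⇑D '' closedBall (0 : EuclideanSpace ℝ (Fin d)) 1) = ⇑T.symm ⁻¹' (⇑D '' closedBall (0 : EuclideanSpace ℝ (Fin d)) 1) := by
        ext p
        constructor
        · rintro ⟨q, hq, rfl⟩; simpa using hq
        · intro h; exact ⟨T.symm p, h, by simp⟩
      rw [h2, T.symm.measurePreserving.measure_preimage hmeasD.nullMeasurableSet,
        Measure.addHaar_image_linearMap, hdet, abs_of_pos hdetpos]
    have hvolS_toReal : (volume S).toReal = (γ * a) * (β * a) ^ (d - 1) * Vball d 1 := by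
      rw [hvolS, ENNReal.toReal_mul, ENNReal.toReal_ofReal hdetpos.le,
        vol_closedBall_toReal d hd 0 1 one_pos.le]
    rw [hvolS_toReal]
    -- numeric comparison
    have hVball_a : Vball d a = a ^ d * Vball d 1 := by
      unfold Vball; rw [one_pow]; ring
    have hrpow : (3 / 4 : ℝ) ^ ((d : ℝ) / 2) = β ^ d := by
      have h2d : ((2:ℕ):ℝ) * ((d:ℝ)/2) = (d:ℝ) := by push_cast; ring
      rw [← hβsq, ← Real.rpow_natCast β 2, ← Real.rpow_mul hβpos.le, h2d,
        Real.rpow_natCast]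
    have hkey : β < γ * ((d : ℝ) + 1) := by
      have hs3 : Real.sqrt 3 < 9/5 := sqrt3_lt
      rcases eq_or_ne d 1 with hd1 | hd1
      · rw [hγ_def, if_pos hd1, hd1, hβ_def]
        norm_num
        linarith
      · rw [hγ_def, if_neg hd1, hβ_def]
        have hd2 : (2:ℝ) ≤ (d:ℝ) := by
          have : 2 ≤ d := by omega
          exact_mod_cast this
        linarith
    have hsplit_pow : β ^ d = β * β ^ (d - 1) := by
      conv_lhs => rw [show d = (d - 1) + 1 by omega]
      rw [pow_succ]; ring
    have hsplit_powa : a ^ d = a ^ (d - 1) * a := by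
      conv_lhs => rw [show d = (d - 1) + 1 by omega]
      rw [pow_succ]
    have hQ : 0 < β ^ (d - 1) * (a ^ d * Vball d 1) :=
      mul_pos (pow_pos hβpos _) (mul_pos (pow_pos ha _) hV1)
    have hd1pos : (0:ℝ) < (d : ℝ) + 1 := by positivity
    rw [htgt, hVball_a, hrpow]
    calc 1 / ((d : ℝ) + 1) * β ^ d * (a ^ d * Vball d 1)
        = (β / ((d : ℝ) + 1)) * (β ^ (d-1) * (a ^ d * Vball d 1)) := by
          rw [hsplit_pow]; ring
      _ < γ * (β ^ (d-1) * (a ^ d * Vball d 1)) := by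
          apply mul_lt_mul_of_pos_right _ hQ
          rw [div_lt_iff₀ hd1pos]
          linarith
      _ = (γ * a) * (β * a) ^ (d - 1) * Vball d 1 := by
          rw [mul_pow, hsplit_powa]; ring
end
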